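/- Let H = ℓ²(ℕ) with canonical orthonormal basis {e_j}_{j∈ℕ}, and let K be the orthogonal projection of H onto the closed span of {e_j : j ≥ 2}. Define Φ₁ = {φ_j}_{j∈ℕ} by φ₁ = e₁, φ₂ = e₂, φ₃ = 0, φ_j = e_{j−1} for j ≥ 4, and Ψ₁ = {ψ_j}_{j∈ℕ} by ψ₁ = e₁, ψ₂ = 0, ψ₃ = e₂, ψ_j = e_{j−1} for j ≥ 4 (so Φ₁ = {e₁, e₂, 0, e₃, e₄, …} and Ψ₁ = {e₁, 0, e₂, e₃, e₄, …}). Then Φ₁ and Ψ₁ are K-frames for H, but they are not K-woven: for σ = ℕ ∖ {2}, the family {φ_j}_{j∈σ} ∪ {ψ_j}_{j∈σᶜ} is not a K-frame for H, since ∑_{j∈σ} |⟨e₂, φ_j⟩|² + ∑_{j∈σᶜ} |⟨e₂, ψ_j⟩|² = 0 while ‖K* e₂‖² = 1. -/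

import Mathlib

/- STATEMENT 13: in H = ℓ²(ℕ) (0-based canonical basis E 0, E 1, …; the paper's e_j is
E (j-1)), with K the orthogonal projection onto the closed span of {E k : k ≥ 1},
Φ₁ = {e₁, e₂, 0, e₃, e₄, …} and Ψ₁ = {e₁, 0, e₂, e₃, e₄, …} are K-frames but are not
K-woven: for σ = ℕ ∖ {2} (0-based: ℕ ∖ {1}) the weaving is not a K-frame, since the
weaving sum at e₂ = E 1 is 0 while ‖K* e₂‖² = 1. -/

local notation "⟪" x ", " y "⟫" => @inner ℂ _ _ x y

noncomputable section

abbrev H2 : Type := lp (fun _ : ℕ => ℂ) 2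

/-- The canonical orthonormal basis of ℓ²(ℕ) (0-based; the paper's `e_j` is `E (j-1)`). -/
def E (n : ℕ) : H2 := lp.single 2 n 1

/-- The closed span of {E k : k ≥ 1}, i.e. of the paper's {e_j : j ≥ 2}. -/
def S : Submodule ℂ H2 :=
  (Submodule.span ℂ (Set.range fun k : ℕ => E (k + 1))).topologicalClosure

/-- Φ₁ = {e₁, e₂, 0, e₃, e₄, …} (0-based indexing). -/
def Φ₁ (n : ℕ) : H2 :=
  if n = 0 then E 0 else if n = 1 then E 1 else if n = 2 then 0 else E (n - 1)

/-- Ψ₁ = {e₁, 0, e₂, e₃, e₄, …} (0-based indexing). -/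
def Ψ₁ (n : ℕ) : H2 :=
  if n = 0 then E 0 else if n = 1 then 0 else if n = 2 then E 1 else E (n - 1)

/-- σ = ℕ ∖ {2} in the paper's 1-based indexing, i.e. ℕ ∖ {1} in 0-based indexing. -/
def σ₀ : Set ℕ := {n | n ≠ 1}

/-- `φ` is a `K`-frame with lower bound `A` and upper bound `B`. -/
def IsKFrameWith (K : H2 →L[ℂ] H2) (φ : ℕ → H2) (A B : ℝ) : Prop :=
  0 < A ∧ 0 < B ∧ ∀ f : H2,
    Summable (fun j : ℕ => ‖⟪f, φ j⟫‖ ^ 2) ∧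
    A * ‖ContinuousLinearMap.adjoint K f‖ ^ 2 ≤ ∑' j : ℕ, ‖⟪f, φ j⟫‖ ^ 2 ∧
    ∑' j : ℕ, ‖⟪f, φ j⟫‖ ^ 2 ≤ B * ‖f‖ ^ 2

/-
Both Φ₁ and Ψ₁ are the orthonormal basis with one zero vector inserted, so Parseval's identity
makes each of them a Parseval frame; since `K` is an orthogonal projection, `‖K* f‖ ≤ ‖f‖` and
both are `K`-frames with bounds `1, 1`. The weaving along `σ₀` drops `φ₂ = e₂`, the only copy
of `e₂` in Φ₁, and takes `ψ₂ = 0` in its place, so it annihilates `e₂`, which `K*` fixes.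
-/

open ContinuousLinearMap

theorem Submodule.starProjection_eq_of_forall {𝕜 F : Type*} [RCLike 𝕜] [NormedAddCommGroup F]
    [InnerProductSpace 𝕜 F] (U : Submodule 𝕜 F) [U.HasOrthogonalProjection] {T : F →L[𝕜] F}
    (hT₁ : ∀ f, T f ∈ U) (hT₂ : ∀ f, f - T f ∈ Uᗮ) : U.starProjection = T :=
  ContinuousLinearMap.ext fun f => U.eq_starProjection_of_mem_orthogonal (hT₁ f) (hT₂ f)

theorem hasSum_norm_inner_sq_of_reindex {𝕜 F ι κ : Type*} [RCLike 𝕜] [NormedAddCommGroup F]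
    [InnerProductSpace 𝕜 F] {φ : ι → F} {e : κ → F} {g : κ → ι} (hg : g.Injective)
    (hφe : ∀ k, φ (g k) = e k) (hφ : ∀ i ∉ Set.range g, φ i = 0) {f : F} {s : ℝ}
    (he : HasSum (fun k => ‖inner 𝕜 f (e k)‖ ^ 2) s) :
    HasSum (fun i => ‖inner 𝕜 f (φ i)‖ ^ 2) s := by
  refine (hg.hasSum_iff fun i hi => ?_).1 ?_
  · simp [hφ i hi]
  · simpa [Function.comp_def, hφe] using he

theorem E_apply (m n : ℕ) : E m n = if n = m then 1 else 0 := by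
  rw [E, lp.single_apply, Pi.single_apply]

theorem inner_E (f : H2) (n : ℕ) : ⟪f, E n⟫ = starRingEnd ℂ (f n) := by
  simp [E, lp.inner_single_right, RCLike.inner_apply]

theorem norm_E (n : ℕ) : ‖E n‖ = 1 := by
  rw [E, lp.norm_single (by norm_num), norm_one]

theorem hasSum_norm_inner_E_sq (f : H2) : HasSum (fun n => ‖⟪f, E n⟫‖ ^ 2) (‖f‖ ^ 2) := by
  have h := lp.hasSum_norm (p := 2) (by norm_num) f
  simp only [ENNReal.toReal_ofNat, Real.rpow_two] at h
  simpa only [inner_E, RCLike.norm_conj] using h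

instance : CompleteSpace S := Submodule.topologicalClosure.completeSpace _

theorem E_mem_S (k : ℕ) : E (k + 1) ∈ S :=
  Submodule.le_topologicalClosure _ (Submodule.subset_span ⟨k, rfl⟩)

theorem hasSum_norm_inner_Φ₁_sq (f : H2) : HasSum (fun n => ‖⟪f, Φ₁ n⟫‖ ^ 2) (‖f‖ ^ 2) := by
  refine hasSum_norm_inner_sq_of_reindex (g := fun n => if n < 2 then n else n + 1)
    (fun a b h => by dsimp only at h; split_ifs at h <;> omega) (fun n => ?_) (fun i hi => ?_)
    (hasSum_norm_inner_E_sq f)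
  · rcases n with _ | _ | n <;> simp [Φ₁]
  · have : i = 2 := by
      by_contra h
      exact hi ⟨if i < 2 then i else i - 1, by dsimp only; split_ifs <;> omega⟩
    simp [this, Φ₁]

theorem Ψ₁_eq_Φ₁_comp_swap : Ψ₁ = Φ₁ ∘ Equiv.swap 1 2 := by
  funext n
  rcases n with _ | _ | _ | n <;> simp [Ψ₁, Φ₁, Equiv.swap_apply_of_ne_of_ne]

theorem hasSum_norm_inner_Ψ₁_sq (f : H2) : HasSum (fun n => ‖⟪f, Ψ₁ n⟫‖ ^ 2) (‖f‖ ^ 2) := by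
  rw [Ψ₁_eq_Φ₁_comp_swap]
  exact (Equiv.hasSum_iff (f := fun n => ‖⟪f, Φ₁ n⟫‖ ^ 2) _).2 (hasSum_norm_inner_Φ₁_sq f)

theorem inner_E_one_Φ₁ {j : ℕ} (hj : j ≠ 1) : ⟪E 1, Φ₁ j⟫ = 0 := by
  unfold Φ₁
  split_ifs <;> simp [inner_E, E_apply]; omega

theorem isKFrameWith_one_one {K : H2 →L[ℂ] H2} (hK : ‖K‖ ≤ 1) {φ : ℕ → H2}
    (hφ : ∀ f, HasSum (fun j => ‖⟪f, φ j⟫‖ ^ 2) (‖f‖ ^ 2)) : IsKFrameWith K φ 1 1 := by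
  refine ⟨one_pos, one_pos, fun f => ⟨(hφ f).summable, ?_, by rw [(hφ f).tsum_eq, one_mul]⟩⟩
  have hK' : ‖adjoint K f‖ ≤ ‖f‖ := by
    simpa using (adjoint K).le_of_opNorm_le (c := 1) (by rwa [LinearIsometryEquiv.norm_map]) f
  rw [(hφ f).tsum_eq, one_mul]
  gcongr

theorem weaving_sum_E_one_eq_zero :
    ∑' j : σ₀, ‖⟪E 1, Φ₁ (j : ℕ)⟫‖ ^ 2 + ∑' j : ↥σ₀ᶜ, ‖⟪E 1, Ψ₁ (j : ℕ)⟫‖ ^ 2 = 0 := by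
  have hΦ : ∀ j : σ₀, ‖⟪E 1, Φ₁ (j : ℕ)⟫‖ ^ 2 = 0 := fun ⟨j, hj⟩ => by
    simp [inner_E_one_Φ₁ hj]
  have hΨ : ∀ j : ↥σ₀ᶜ, ‖⟪E 1, Ψ₁ (j : ℕ)⟫‖ ^ 2 = 0 := fun ⟨j, hj⟩ => by
    obtain rfl : j = 1 := by simpa [σ₀] using hj
    simp [Ψ₁]
  simp only [hΦ, hΨ, tsum_zero, add_zero]

theorem stmt13 (K : H2 →L[ℂ] H2)
    -- K is the orthogonal projection of H2 onto S
    (hK₁ : ∀ f : H2, K f ∈ S) (hK₂ : ∀ f : H2, f - K f ∈ Sᗮ) :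
    (∃ A B : ℝ, IsKFrameWith K Φ₁ A B) ∧
    (∃ A B : ℝ, IsKFrameWith K Ψ₁ A B) ∧
    (∑' j : σ₀, ‖⟪E 1, Φ₁ (j : ℕ)⟫‖ ^ 2 + ∑' j : ↥σ₀ᶜ, ‖⟪E 1, Ψ₁ (j : ℕ)⟫‖ ^ 2 = 0) ∧
    ‖ContinuousLinearMap.adjoint K (E 1)‖ ^ 2 = 1 ∧
    -- the weaving along σ₀ is not a K-frame
    ¬ ∃ A B : ℝ, 0 < A ∧ 0 < B ∧ ∀ f : H2,
        Summable (fun j : σ₀ => ‖⟪f, Φ₁ (j : ℕ)⟫‖ ^ 2) ∧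
        Summable (fun j : ↥σ₀ᶜ => ‖⟪f, Ψ₁ (j : ℕ)⟫‖ ^ 2) ∧
        A * ‖ContinuousLinearMap.adjoint K f‖ ^ 2 ≤
          ∑' j : σ₀, ‖⟪f, Φ₁ (j : ℕ)⟫‖ ^ 2 + ∑' j : ↥σ₀ᶜ, ‖⟪f, Ψ₁ (j : ℕ)⟫‖ ^ 2 ∧
        ∑' j : σ₀, ‖⟪f, Φ₁ (j : ℕ)⟫‖ ^ 2 + ∑' j : ↥σ₀ᶜ, ‖⟪f, Ψ₁ (j : ℕ)⟫‖ ^ 2 ≤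
          B * ‖f‖ ^ 2 := by
  obtain rfl := Submodule.starProjection_eq_of_forall S hK₁ hK₂
  have hK : ‖S.starProjection‖ ≤ 1 := Submodule.starProjection_norm_le S
  have hE : ‖adjoint S.starProjection (E 1)‖ ^ 2 = 1 := by
    rw [(isSelfAdjoint_starProjection S).adjoint_eq,
      S.starProjection_eq_self_iff.mpr (E_mem_S 0), norm_E, one_pow]
  refine ⟨⟨1, 1, isKFrameWith_one_one hK hasSum_norm_inner_Φ₁_sq⟩,
    ⟨1, 1, isKFrameWith_one_one hK hasSum_norm_inner_Ψ₁_sq⟩, weaving_sum_E_one_eq_zero, hE, ?_⟩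
  rintro ⟨A, B, hA, -, h⟩
  have hlow := (h (E 1)).2.2.1
  rw [weaving_sum_E_one_eq_zero, hE] at hlow
  linarith
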